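/- arXiv:2408.01226 — 4 statements merged into one kernel-verified Lean document; each statement's English description precedes it below -/
import Mathlib

section
/- If B is an algebra derived from A (every operation of B is the interpretation in A of an F_A-term), then every subset of the domain of B that is recognizable in A is also recognizable in B. -/
/-- A single-sorted finite signature: function symbols with arities. -/
structure Sig where
  Symb : Type
  ar : Symb → ℕ

/-- An algebra over a signature. -/
structure Alg (σ : Sig) where
  U : Type
  op : ∀ f : σ.Symb, (Fin (σ.ar f) → U) → U

/-- A homomorphism between two algebras over the same signature. -/
structure Hom (σ : Sig) (A B : Alg σ) where
  toFun : A.U → B.U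
  map_op : ∀ (f : σ.Symb) (args : Fin (σ.ar f) → A.U),
    toFun (A.op f args) = B.op f (fun i => toFun (args i))

/-- A set `L` is recognizable in `A` if it is the preimage of some subset of a
(locally) finite algebra under a homomorphism. -/
def Recognizable {σ : Sig} (A : Alg σ) (L : Set A.U) : Prop :=
  ∃ (B : Alg σ) (_ : Finite B.U) (h : Hom σ A B) (C : Set B.U), L = h.toFun ⁻¹' C

/-- Terms over a signature with variables from `V`. -/
inductive Term (σ : Sig) (V : Type) : Type
  | var : V → Term σ V
  | app : (f : σ.Symb) → (Fin (σ.ar f) → Term σ V) → Term σ V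

/-- Evaluation of a term in an algebra under a valuation of the variables. -/
def evalT {σ : Sig} (A : Alg σ) {V : Type} (ρ : V → A.U) : Term σ V → A.U
  | .var x => ρ x
  | .app f args => A.op f (fun i => evalT A ρ (args i))

/-- The derived algebra of `A` over signature `σB`, whose universe is a subset `S`
of the universe of `A` closed under the derived operations, and whose operations
are interpretations of `σA`-terms `t f`. -/
def derivedSubAlg {σA : Sig} (A : Alg σA) (σB : Sig)
    (t : ∀ f : σB.Symb, Term σA (Fin (σB.ar f)))
    (S : Set A.U)
    (hS : ∀ (f : σB.Symb) (args : Fin (σB.ar f) → A.U),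
      (∀ i, args i ∈ S) → evalT A args (t f) ∈ S) : Alg σB where
  U := S
  op := fun f args => ⟨evalT A (fun i => (args i : A.U)) (t f),
    hS f (fun i => (args i : A.U)) (fun i => (args i).2)⟩


theorem hom_evalT {σ : Sig} {A B : Alg σ} (h : Hom σ A B) {V : Type} (ρ : V → A.U)
    (tm : Term σ V) : h.toFun (evalT A ρ tm) = evalT B (fun v => h.toFun (ρ v)) tm := by
  induction tm with
  | var x => rfl
  | app f args ih =>
    simp only [evalT, h.map_op]
    exact congrArg _ (funext fun i => ih i)

/-- every subset of the domain of a derived algebra `B` that is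
recognizable in `A` is also recognizable in `B`. -/
theorem recognizable_in_derived {σA : Sig} (A : Alg σA) (σB : Sig)
    (t : ∀ f : σB.Symb, Term σA (Fin (σB.ar f)))
    (S : Set A.U)
    (hS : ∀ (f : σB.Symb) (args : Fin (σB.ar f) → A.U),
      (∀ i, args i ∈ S) → evalT A args (t f) ∈ S)
    (L : Set ((derivedSubAlg A σB t S hS).U))
    (hL : Recognizable A (Subtype.val '' L)) :
    Recognizable (derivedSubAlg A σB t S hS) L := by
  obtain ⟨D, hfin, h, C, hC⟩ := hL
  refine ⟨⟨D.U, fun f args => evalT D args (t f)⟩, hfin,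
    ⟨fun x => h.toFun x.val, ?_⟩, C, ?_⟩
  · intro f args
    exact hom_evalT h _ (t f)
  · ext x
    constructor
    · intro hx
      have : x.val ∈ Subtype.val '' L := ⟨x, hx, rfl⟩
      rw [hC] at this
      exact this
    · intro hx
      have : x.val ∈ Subtype.val '' L := by rw [hC]; exact hx
      obtain ⟨y, hy, hyx⟩ := this
      rwa [Subtype.val_injective hyx] at hy
end

section
/- If a finite commutative semigroup (S, ·) is aperiodic, then its powerset, with the lifted operation A · B = {a·b : a ∈ A, b ∈ B}, is also a finite commutative aperiodic semigroup. -/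
open Pointwise

/-- `pw a n` is the (n+1)-st power of `a` in a semigroup: `pw a n = a^(n+1)`. -/
def pw {S : Type} [Mul S] (a : S) : ℕ → S
  | 0 => a
  | n + 1 => pw a n * a

/-- The lifted (complex) multiplication on subsets of a semigroup. -/
def setMul {S : Type} [Mul S] (A B : Set S) : Set S := Set.image2 (· * ·) A B

/-- Iterated powers of a set under the lifted multiplication:
`spw A n = A^(n+1)`. -/
def spw {S : Type} [Mul S] (A : Set S) : ℕ → Set S
  | 0 => A
  | n + 1 => setMul (spw A n) A

section Aux

variable {S : Type} [CommSemigroup S]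

lemma coe_pw (a : S) : ∀ n, ((pw a n : S) : WithOne S) = (a : WithOne S) ^ (n + 1)
  | 0 => by simp [pw]
  | n + 1 => by
    rw [pw, WithOne.coe_mul, coe_pw a n]
    exact (pow_succ _ _).symm

/-- The embedding of subsets of `S` into subsets of `WithOne S`. -/
def emb (A : Set S) : Set (WithOne S) := (fun s : S => (s : WithOne S)) '' A

omit [CommSemigroup S] in
lemma emb_injective : Function.Injective (emb (S := S)) :=
  Set.image_injective.2 fun _ _ h => WithOne.coe_inj.1 h

instance {T : Type} [Finite T] : Finite (WithOne T) := by
  haveI := Fintype.ofFinite T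
  exact inferInstanceAs (Finite (Option T))

lemma emb_mul (A B : Set S) : emb (setMul A B) = emb A * emb B := by
  rw [emb, setMul, Set.image_image2, emb, emb, ← Set.image2_mul, Set.image2_image_left,
    Set.image2_image_right]
  rfl

lemma emb_spw (A : Set S) : ∀ n, emb (spw A n) = emb A ^ (n + 1)
  | 0 => by rw [spw, pow_one]
  | n + 1 => by
    rw [spw, emb_mul, emb_spw A n]
    exact (pow_succ _ _).symm

lemma multiset_prod_mem_pow {α : Type} [CommMonoid α] (P : Set α) :
    ∀ m : Multiset α, (∀ y ∈ m, y ∈ P) → m.prod ∈ P ^ Multiset.card m := by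
  intro m
  induction m using Multiset.induction with
  | empty => intro _; simp [Set.mem_one]
  | cons a s ih =>
    intro h
    rw [Multiset.prod_cons, Multiset.card_cons, pow_succ']
    exact Set.mul_mem_mul (h a (Multiset.mem_cons_self a s))
      (ih fun y hy => h y (Multiset.mem_cons_of_mem hy))

lemma mem_pow_multiset {α : Type} [CommMonoid α] {P : Set α} {x : α} {k : ℕ}
    (hx : x ∈ P ^ k) :
    ∃ m : Multiset α, Multiset.card m = k ∧ (∀ y ∈ m, y ∈ P) ∧ m.prod = x := by
  rw [Set.mem_pow] at hx
  obtain ⟨f, hf⟩ := hx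
  refine ⟨((List.ofFn fun i => (f i : α)) : List α), by simp, ?_, ?_⟩
  · intro y hy
    simp only [Multiset.mem_coe, List.mem_ofFn] at hy
    obtain ⟨i, rfl⟩ := hy
    exact (f i).2
  · rw [Multiset.prod_coe]; exact hf

lemma exists_high_count {α : Type} [Finite α] [DecidableEq α] {m : Multiset α} {N : ℕ}
    (h : N * Nat.card α < Multiset.card m) : ∃ b ∈ m, N + 1 ≤ m.count b := by
  haveI : Fintype α := Fintype.ofFinite α
  by_contra hc
  push_neg at hc
  have hle : Multiset.card m ≤ N * Nat.card α := by
    rw [Nat.card_eq_fintype_card]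
    calc Multiset.card m = ∑ a ∈ m.toFinset, m.count a :=
          (Multiset.toFinset_sum_count_eq m).symm
      _ ≤ ∑ _a ∈ m.toFinset, N := Finset.sum_le_sum (fun a ha => by
          have := hc a (Multiset.mem_toFinset.1 ha); omega)
      _ = m.toFinset.card * N := by rw [Finset.sum_const, smul_eq_mul]
      _ ≤ Fintype.card α * N := Nat.mul_le_mul_right _ (Finset.card_le_univ _)
      _ = N * Fintype.card α := Nat.mul_comm _ _
  omega

lemma pow_step {α : Type} [CommMonoid α] [Finite α] {P : Set α} {N : ℕ}
    (hst : ∀ b ∈ P, ∀ k, N ≤ k → b ^ (k + 1) = b ^ k)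
    {j : ℕ} (hj : N * Nat.card α < j) :
    P ^ (j + 1) = P ^ j := by
  classical
  apply Set.Subset.antisymm
  · -- P^(j+1) ⊆ P^j : remove one copy of a highly repeated factor
    intro x hx
    obtain ⟨m, hcard, hmem, hprod⟩ := mem_pow_multiset hx
    obtain ⟨b, hbm, hbt⟩ := exists_high_count
      (show N * Nat.card α < Multiset.card m by omega)
    have hbP := hmem b hbm
    set t := m.count b with ht
    set r := Multiset.filter (fun y => ¬ y = b) m with hr
    have hm : Multiset.replicate t b + r = m := by
      rw [ht, ← Multiset.filter_eq' m b, hr]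
      exact Multiset.filter_add_not _ m
    have hx' : b ^ t * r.prod = x := by
      rw [← hprod]
      conv_rhs => rw [← hm]
      rw [Multiset.prod_add, Multiset.prod_replicate]
    have hcr : t + Multiset.card r = j + 1 := by
      rw [← hcard, ← hm, Multiset.card_add, Multiset.card_replicate]
    have hxeq : x = b ^ (t - 1) * r.prod := by
      rw [← hx']
      congr 1
      have h1 : b ^ (t - 1 + 1) = b ^ (t - 1) := hst b hbP (t - 1) (by omega)
      have h2 : t - 1 + 1 = t := by omega
      rw [h2] at h1
      exact h1
    rw [hxeq]
    have hmem' : ∀ y ∈ Multiset.replicate (t - 1) b + r, y ∈ P := by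
      intro y hy
      rcases Multiset.mem_add.1 hy with h | h
      · rw [Multiset.eq_of_mem_replicate h]; exact hbP
      · exact hmem y (Multiset.mem_of_mem_filter (hr ▸ h))
    have := multiset_prod_mem_pow P (Multiset.replicate (t - 1) b + r) hmem'
    rw [Multiset.prod_add, Multiset.prod_replicate, Multiset.card_add,
      Multiset.card_replicate] at this
    have hcc : t - 1 + Multiset.card r = j := by omega
    rwa [hcc] at this
  · -- P^j ⊆ P^(j+1) : x = x * b for a highly repeated factor b
    intro x hx
    obtain ⟨m, hcard, hmem, hprod⟩ := mem_pow_multiset hx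
    obtain ⟨b, hbm, hbt⟩ := exists_high_count
      (show N * Nat.card α < Multiset.card m by omega)
    have hbP := hmem b hbm
    set t := m.count b with ht
    set r := Multiset.filter (fun y => ¬ y = b) m with hr
    have hm : Multiset.replicate t b + r = m := by
      rw [ht, ← Multiset.filter_eq' m b, hr]
      exact Multiset.filter_add_not _ m
    have hx' : b ^ t * r.prod = x := by
      rw [← hprod]
      conv_rhs => rw [← hm]
      rw [Multiset.prod_add, Multiset.prod_replicate]
    have hxb : x * b = x := by
      rw [← hx', mul_right_comm, ← pow_succ, hst b hbP t (by omega)]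
    rw [← hxb, pow_succ]
    exact Set.mul_mem_mul hx hbP

lemma uniform_aperiodic [Finite S]
    (hap : ∀ (x : S) (n : ℕ), pw x n * pw x n = pw x n → pw x n * x = pw x n) :
    ∃ N : ℕ, 1 ≤ N ∧ ∀ (a : S) (k : ℕ), N ≤ k →
      (a : WithOne S) ^ (k + 1) = (a : WithOne S) ^ k := by
  classical
  have key : ∀ a : S, ∃ n : ℕ, 1 ≤ n ∧ ∀ k, n ≤ k →
      (a : WithOne S) ^ (k + 1) = (a : WithOne S) ^ k := by
    intro a
    set x : WithOne S := (a : WithOne S) with hxdef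
    obtain ⟨i0, j0, hij, hpow0⟩ :=
      Finite.exists_ne_map_eq_of_infinite (fun n : ℕ => x ^ (n + 1))
    have hpow : x ^ (i0 + 1) = x ^ (j0 + 1) := hpow0
    have H : ∃ i d : ℕ, 1 ≤ d ∧ x ^ (i + 1) = x ^ (i + 1 + d) := by
      rcases lt_or_gt_of_ne hij with h | h
      · exact ⟨i0, j0 - i0, by omega, by rw [hpow]; congr 1; omega⟩
      · exact ⟨j0, i0 - j0, by omega, by rw [← hpow]; congr 1; omega⟩
    obtain ⟨i, d, hd, hper⟩ := H
    have hshift : ∀ m, i + 1 ≤ m → x ^ (m + d) = x ^ m := by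
      intro m hm
      have h1 : x ^ (m + d) = x ^ (i + 1 + d) * x ^ (m - (i + 1)) := by
        rw [← pow_add]; congr 1; omega
      rw [h1, ← hper, ← pow_add]
      congr 1; omega
    have hmul : ∀ t m, i + 1 ≤ m → x ^ (m + t * d) = x ^ m := by
      intro t
      induction t with
      | zero => simp
      | succ t ih =>
        intro m hm
        have h2 : m + (t + 1) * d = (m + t * d) + d := by ring
        rw [h2, hshift _ (by omega), ih m hm]
    set n := (i + 1) * d with hn
    have hn1 : 1 ≤ n := by
      have : 1 * 1 ≤ (i + 1) * d := Nat.mul_le_mul (by omega) hd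
      omega
    have hin : i + 1 ≤ n := by
      have : (i + 1) * 1 ≤ (i + 1) * d := Nat.mul_le_mul_left _ hd
      omega
    have hidem : x ^ n * x ^ n = x ^ n := by
      rw [← pow_add]
      have h3 : n + n = n + (i + 1) * d := by rw [← hn]
      rw [h3, hmul (i + 1) n hin]
    have hpwn : ((pw a (n - 1) : S) : WithOne S) = x ^ n := by
      rw [coe_pw]; congr 1; omega
    have hidemS : pw a (n - 1) * pw a (n - 1) = pw a (n - 1) :=
      WithOne.coe_inj.1 (by rw [WithOne.coe_mul, hpwn, hidem])
    have hstep := hap a (n - 1) hidemS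
    have hx1 : x ^ n * x = x ^ n := by
      have h4 : ((pw a (n - 1) * a : S) : WithOne S) = ((pw a (n - 1) : S) : WithOne S) :=
        congrArg _ hstep
      rwa [WithOne.coe_mul, hpwn] at h4
    have hfix : ∀ k, n ≤ k → x ^ k = x ^ n := by
      intro k hk
      induction k with
      | zero => omega
      | succ k ih =>
        rcases Nat.lt_or_ge k n with h | h
        · have h5 : k + 1 = n := by omega
          rw [h5]
        · rw [pow_succ, ih h, hx1]
    exact ⟨n, hn1, fun k hk => by rw [hfix (k + 1) (by omega), hfix k hk]⟩
  haveI : Fintype S := Fintype.ofFinite S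
  choose f hf1 hf2 using key
  refine ⟨max 1 (Finset.univ.sup f), le_max_left _ _, ?_⟩
  intro a k hk
  exact hf2 a k (le_trans (le_trans (Finset.le_sup (Finset.mem_univ a))
    (le_max_right _ _)) hk)

end Aux

/-- the powerset of a finite commutative aperiodic semigroup,
with the lifted operation, is again a commutative aperiodic semigroup. -/
theorem powerset_aperiodic {S : Type} [CommSemigroup S] [Finite S]
    (hap : ∀ (x : S) (n : ℕ), pw x n * pw x n = pw x n → pw x n * x = pw x n) :
    (∀ A B : Set S, setMul A B = setMul B A) ∧
    (∀ A B C : Set S, setMul (setMul A B) C = setMul A (setMul B C)) ∧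
    (∀ (A : Set S) (n : ℕ),
      setMul (spw A n) (spw A n) = spw A n → setMul (spw A n) A = spw A n) := by
  classical
  obtain ⟨N, hN1, hN⟩ := uniform_aperiodic hap
  refine ⟨?_, ?_, ?_⟩
  · intro A B
    apply emb_injective
    rw [emb_mul, emb_mul, mul_comm]
  · intro A B C
    apply emb_injective
    rw [emb_mul, emb_mul, emb_mul, emb_mul, mul_assoc]
  · intro A n hidem
    apply emb_injective
    set P : Set (WithOne S) := emb A with hP
    have hPid : P ^ (n + 1) * P ^ (n + 1) = P ^ (n + 1) := by
      have h := congrArg emb hidem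
      rwa [emb_mul, emb_spw, ← hP] at h
    have hstP : ∀ b ∈ P, ∀ k, N ≤ k → b ^ (k + 1) = b ^ k := by
      rintro b ⟨a, _, rfl⟩ k hk
      exact hN a k hk
    set J := N * Nat.card (WithOne S) + 1 with hJ
    have hstep : ∀ j, J ≤ j → P ^ (j + 1) = P ^ j := fun j hj =>
      pow_step hstP (by omega)
    have hmulk : ∀ k, P ^ ((k + 1) * (n + 1)) = P ^ (n + 1) := by
      intro k
      induction k with
      | zero => norm_num
      | succ k ih =>
        have h6 : (k + 1 + 1) * (n + 1) = (k + 1) * (n + 1) + (n + 1) := by ring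
        rw [h6, pow_add, ih, hPid]
    have hq : J ≤ (J + 1) * (n + 1) := by
      have : (J + 1) * 1 ≤ (J + 1) * (n + 1) := Nat.mul_le_mul_left _ (by omega)
      omega
    have key : P ^ (n + 2) = P ^ (n + 1) := by
      calc P ^ (n + 2) = P ^ (n + 1) * P := by rw [pow_succ]
        _ = P ^ ((J + 1) * (n + 1)) * P := by rw [hmulk J]
        _ = P ^ ((J + 1) * (n + 1) + 1) := (pow_succ _ _).symm
        _ = P ^ ((J + 1) * (n + 1)) := hstep _ hq
        _ = P ^ (n + 1) := hmulk J
    show emb (setMul (spw A n) A) = emb (spw A n)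
    rw [emb_mul, emb_spw, ← hP, ← pow_succ]
    exact key
end

section
/- For a normalized stratified grammar Γ and any nonterminal X and multiset m of Y-nonterminals, X can derive the multiset m (using only rules of forms X → X ∥ Y^q and X → Y_1^{q_1} ∥ ... ∥ Y_k^{q_k}) if and only if X can derive the reduced multiset ⌊m⌋_Γ. -/
/-- `Matches ruleA ruleB X m`: the nonterminal `X` can produce the multiset `m`
of `Y`-nonterminals using one rule `X → Y₁^{q₁} ∥ … ∥ Y_k^{q_k}` (from `ruleB`)
followed by arbitrarily many applications of rules `X → X ∥ Y^q` (from the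
normalized rule map `ruleA`). -/
inductive Matches {NX NY : Type} [DecidableEq NY]
    (ruleA : NX → NY → Option ℕ) (ruleB : Finset (NX × Multiset NY)) :
    NX → Multiset NY → Prop
  | base (X : NX) (m : Multiset NY) : (X, m) ∈ ruleB → Matches ruleA ruleB X m
  | step (X : NX) (Y : NY) (q : ℕ) (m : Multiset NY) :
      ruleA X Y = some q → Matches ruleA ruleB X m →
      Matches ruleA ruleB X (m + q • ({Y} : Multiset NY))

/-- The period `p(Y)`: the lcm of the exponents of the rules `X → X ∥ Y^q`. -/
def pFun {NX NY : Type} [Fintype NX] (ruleA : NX → NY → Option ℕ) (Y : NY) : ℕ :=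
  Finset.univ.lcm (fun X : NX => (ruleA X Y).getD 1)

/-- The base bound `b(Y)`: the maximal exponent of `Y` in the rules of the form
`X → Y₁^{q₁} ∥ … ∥ Y_k^{q_k}`. -/
def bFun {NX NY : Type} [DecidableEq NY] (ruleB : Finset (NX × Multiset NY))
    (Y : NY) : ℕ :=
  ruleB.sup (fun r => r.2.count Y)

/-- The threshold `q(Y) = b(Y) + p(Y)`. -/
def qFun {NX NY : Type} [Fintype NX] [DecidableEq NY]
    (ruleA : NX → NY → Option ℕ) (ruleB : Finset (NX × Multiset NY)) (Y : NY) : ℕ :=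
  bFun ruleB Y + pFun ruleA Y

/-- The truncated count of `Y` in `m`. -/
def truncC {NX NY : Type} [Fintype NX] [DecidableEq NY]
    (ruleA : NX → NY → Option ℕ) (ruleB : Finset (NX × Multiset NY))
    (m : Multiset NY) (Y : NY) : ℕ :=
  if m.count Y < qFun ruleA ruleB Y then m.count Y
  else qFun ruleA ruleB Y + (m.count Y - qFun ruleA ruleB Y) % pFun ruleA Y

/-- The reduced (truncated) multiset `⌊m⌋_Γ`. -/
def truncM {NX NY : Type} [Fintype NX] [Fintype NY] [DecidableEq NY]
    (ruleA : NX → NY → Option ℕ) (ruleB : Finset (NX × Multiset NY))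
    (m : Multiset NY) : Multiset NY :=
  ∑ Y : NY, truncC ruleA ruleB m Y • ({Y} : Multiset NY)

/-!
Every derivation of `X` starts from one base rule `(X, m₀)` and then pumps each `Y` by
multiples of the exponent `q` of the rule `X → X ∥ Y^q`, so `X` derives `m` iff some base
`m₀` lies below `m` with `m ≡ m₀` coordinatewise modulo those exponents. Above the threshold
`q(Y) = b(Y) + p(Y)` both `m(Y)` and `⌊m⌋(Y)` exceed every base count, and they are congruent
modulo `p(Y)`, hence modulo each exponent `q ∣ p(Y)`; below it the two counts coincide.
-/

section Pumping

variable {NX NY : Type} [DecidableEq NY]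

/-- A missing rule `X → X ∥ Y^q` is encoded as the modulus `0`, which forces equality. -/
def PumpsTo (ruleA : NX → NY → Option ℕ) (X : NX) (m₀ m : Multiset NY) : Prop :=
  ∀ Y, m₀.count Y ≤ m.count Y ∧ m.count Y ≡ m₀.count Y [MOD (ruleA X Y).getD 0]

theorem PumpsTo.refl (ruleA : NX → NY → Option ℕ) (X : NX) (m : Multiset NY) :
    PumpsTo ruleA X m m :=
  fun _ => ⟨le_rfl, Nat.ModEq.refl _⟩

theorem PumpsTo.add_nsmul_singleton {ruleA : NX → NY → Option ℕ} {X : NX}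
    {m₀ m : Multiset NY} {Y : NY} {q : ℕ} (h : PumpsTo ruleA X m₀ m)
    (hq : ruleA X Y = some q) : PumpsTo ruleA X m₀ (m + q • {Y}) := by
  intro Z
  obtain ⟨hle, hmod⟩ := h Z
  rw [Multiset.count_add, Multiset.count_nsmul, Multiset.count_singleton]
  by_cases hZ : Z = Y
  · subst hZ
    rw [if_pos rfl, mul_one]
    rw [hq, Option.getD_some] at hmod ⊢
    exact ⟨le_add_right hle, (Nat.add_modEq_left_iff.mpr (dvd_refl q)).trans hmod⟩
  · rw [if_neg hZ, mul_zero, add_zero]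
    exact ⟨hle, hmod⟩

theorem Matches.add_getD_mul_nsmul_singleton {ruleA : NX → NY → Option ℕ}
    {ruleB : Finset (NX × Multiset NY)} {X : NX} {m : Multiset NY}
    (h : Matches ruleA ruleB X m) (Y : NY) (k : ℕ) :
    Matches ruleA ruleB X (m + ((ruleA X Y).getD 0 * k) • {Y}) := by
  cases hq : ruleA X Y with
  | none => simpa using h
  | some q =>
    induction k with
    | zero => simpa using h
    | succ k ih =>
      rw [Option.getD_some, Nat.mul_succ, add_nsmul, ← add_assoc]
      exact Matches.step X Y q _ hq (by simpa [hq] using ih)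

theorem Multiset.count_sum_nsmul_singleton [Fintype NY] (f : NY → ℕ) (Z : NY) :
    (∑ Y, f Y • ({Y} : Multiset NY)).count Z = f Z := by
  rw [Multiset.count_sum']
  simp [Multiset.count_nsmul, Multiset.count_singleton]

theorem matches_iff_exists_pumpsTo [Fintype NY] (ruleA : NX → NY → Option ℕ)
    (ruleB : Finset (NX × Multiset NY)) (X : NX) (m : Multiset NY) :
    Matches ruleA ruleB X m ↔ ∃ m₀, (X, m₀) ∈ ruleB ∧ PumpsTo ruleA X m₀ m := by
  constructor
  · intro h
    induction h with
    | base m hm => exact ⟨m, hm, PumpsTo.refl ruleA X m⟩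
    | step Y q m hq _ ih =>
      obtain ⟨m₀, hm₀, hpump⟩ := ih
      exact ⟨m₀, hm₀, hpump.add_nsmul_singleton hq⟩
  · rintro ⟨m₀, hm₀, hpump⟩
    have hk : ∀ Y, ∃ k, m.count Y - m₀.count Y = (ruleA X Y).getD 0 * k := fun Y =>
      (Nat.modEq_iff_dvd' (hpump Y).1).mp (hpump Y).2.symm
    choose k hk using hk
    have hm : m = m₀ + ∑ Y, ((ruleA X Y).getD 0 * k Y) • ({Y} : Multiset NY) := by
      ext Z
      rw [Multiset.count_add, Multiset.count_sum_nsmul_singleton, ← hk]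
      have := (hpump Z).1
      omega
    have hpartial : ∀ s : Finset NY,
        Matches ruleA ruleB X (m₀ + ∑ Y ∈ s, ((ruleA X Y).getD 0 * k Y) • {Y}) := by
      intro s
      induction s using Finset.induction_on with
      | empty => simpa using Matches.base X m₀ hm₀
      | insert Y s hY ih =>
        rw [Finset.sum_insert hY, add_left_comm, add_comm]
        exact ih.add_getD_mul_nsmul_singleton Y (k Y)
    rw [hm]
    exact hpartial Finset.univ

end Pumping

theorem Nat.le_and_modEq_iff_of_modEq {a c n n' p q : ℕ} (ha : a < c) (hn : c ≤ n)
    (hn' : c ≤ n') (h : n ≡ n' [MOD p]) (hq : q ∣ p ∨ q = 0) :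
    a ≤ n ∧ n ≡ a [MOD q] ↔ a ≤ n' ∧ n' ≡ a [MOD q] := by
  rcases hq with hq | rfl
  · have h' := Nat.ModEq.of_dvd hq h
    exact and_congr (iff_of_true (by omega) (by omega)) ⟨h'.symm.trans, h'.trans⟩
  · simp only [Nat.modEq_zero_iff]
    omega

section Truncation

variable {NX NY : Type} {ruleA : NX → NY → Option ℕ} {ruleB : Finset (NX × Multiset NY)}

theorem pFun_pos [Fintype NX] (hA : ∀ X Y q, ruleA X Y = some q → 1 ≤ q) (Y : NY) :
    0 < pFun ruleA Y := by
  refine Nat.pos_of_ne_zero fun h => ?_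
  obtain ⟨X, -, hX⟩ := Finset.lcm_eq_zero_iff.mp h
  cases hq : ruleA X Y with
  | none => simp [hq] at hX
  | some q => have := hA X Y q hq; simp [hq] at hX; omega

theorem dvd_pFun [Fintype NX] {X : NX} {Y : NY} {q : ℕ} (hq : ruleA X Y = some q) :
    q ∣ pFun ruleA Y := by
  simpa [pFun, hq] using Finset.dvd_lcm (f := fun X => (ruleA X Y).getD 1) (Finset.mem_univ X)

theorem count_le_bFun [DecidableEq NY] {X : NX} {m₀ : Multiset NY} (hm₀ : (X, m₀) ∈ ruleB)
    (Y : NY) :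
    m₀.count Y ≤ bFun ruleB Y :=
  Finset.le_sup (f := fun r : NX × Multiset NY => r.2.count Y) hm₀

variable [Fintype NX] [DecidableEq NY] {m : Multiset NY} {Y : NY}

theorem truncC_of_lt (h : m.count Y < qFun ruleA ruleB Y) :
    truncC ruleA ruleB m Y = m.count Y :=
  if_pos h

theorem le_truncC (h : qFun ruleA ruleB Y ≤ m.count Y) :
    qFun ruleA ruleB Y ≤ truncC ruleA ruleB m Y := by
  rw [truncC, if_neg h.not_gt]
  exact Nat.le_add_right _ _

theorem truncC_modEq_count : truncC ruleA ruleB m Y ≡ m.count Y [MOD pFun ruleA Y] := by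
  unfold truncC
  split_ifs with h
  · rfl
  · have := (Nat.mod_modEq (m.count Y - qFun ruleA ruleB Y) (pFun ruleA Y)).add_left
      (qFun ruleA ruleB Y)
    rwa [Nat.add_sub_cancel' (not_lt.mp h)] at this

theorem count_truncM [Fintype NY] : (truncM ruleA ruleB m).count Y = truncC ruleA ruleB m Y :=
  Multiset.count_sum_nsmul_singleton _ _

end Truncation

/-- for a normalized stratified grammar, a nonterminal `X` can
derive a multiset `m` of `Y`-nonterminals iff it can derive the reduced
multiset `⌊m⌋_Γ`. -/
theorem matches_iff_matches_trunc {NX NY : Type} [Fintype NX] [Fintype NY]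
    [DecidableEq NY]
    (ruleA : NX → NY → Option ℕ) (ruleB : Finset (NX × Multiset NY))
    (hA : ∀ X Y q, ruleA X Y = some q → 1 ≤ q)
    (X : NX) (m : Multiset NY) :
    Matches ruleA ruleB X m ↔ Matches ruleA ruleB X (truncM ruleA ruleB m) := by
  rw [matches_iff_exists_pumpsTo, matches_iff_exists_pumpsTo]
  refine exists_congr fun m₀ => and_congr_right fun hm₀ => forall_congr' fun Y => ?_
  rw [count_truncM]
  by_cases h : m.count Y < qFun ruleA ruleB Y
  · rw [truncC_of_lt h]
  · have hbase : m₀.count Y < qFun ruleA ruleB Y :=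
      (count_le_bFun hm₀ Y).trans_lt (Nat.lt_add_of_pos_right (pFun_pos hA Y))
    refine Nat.le_and_modEq_iff_of_modEq hbase (not_lt.mp h) (le_truncC (not_lt.mp h))
      truncC_modEq_count.symm ?_
    cases hq : ruleA X Y with
    | none => exact Or.inr rfl
    | some q => exact Or.inl (dvd_pFun hq)
end

section
/- For every parse tree T in the parse tree algebra of a class C, the term representing T is unique up to associativity and commutativity of the parallel composition operations: any two ground F_C-terms t_1, t_2 with t_1 and t_2 both mapping to T under the collapse operation are equal modulo AC of ∥. -/
/-- Unordered parse trees, represented as ordered trees (to be compared up to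
permutation): a node carries a finite family of labeled edges, each attached to
`ar f` subtrees. -/
inductive PT (σ : Sig) : Type
  | node (n : ℕ) (f : Fin n → σ.Symb) (child : ∀ i : Fin n, Fin (σ.ar (f i)) → PT σ)

/-- Build a parse-tree node from a list of labeled edges. -/
def ofList {σ : Sig} (l : List ((f : σ.Symb) × (Fin (σ.ar f) → PT σ))) : PT σ :=
  PT.node l.length (fun i => (l.get i).1) (fun i => (l.get i).2)

open Classical

/-- Collapse a ground term to the list of edge components of its root node:
maximal `∥`-subterms are flattened, other symbols become edges. -/
noncomputable def collapseL {σ : Sig} (par : σ.Symb) (h2 : σ.ar par = 2) :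
    Term σ Empty → List ((f : σ.Symb) × (Fin (σ.ar f) → PT σ))
  | .var x => x.elim
  | .app f args =>
    if h : f = par then
      have ha : σ.ar f = 2 := by rw [h, h2]
      collapseL par h2 (args ⟨0, by omega⟩) ++ collapseL par h2 (args ⟨1, by omega⟩)
    else
      [⟨f, fun i => ofList (collapseL par h2 (args i))⟩]

/-- The parse tree of a ground term. -/
noncomputable def collapse {σ : Sig} (par : σ.Symb) (h2 : σ.ar par = 2) (t : Term σ Empty) : PT σ :=
  ofList (collapseL par h2 t)

/-- Equality of parse trees up to permutation of the edges at each node. -/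
inductive PTeq {σ : Sig} : PT σ → PT σ → Prop
  | mk (n n' : ℕ) (f : Fin n → σ.Symb) (f' : Fin n' → σ.Symb)
      (c : ∀ i : Fin n, Fin (σ.ar (f i)) → PT σ)
      (c' : ∀ i : Fin n', Fin (σ.ar (f' i)) → PT σ)
      (e : Fin n ≃ Fin n') (hf : ∀ i, f' (e i) = f i)
      (hc : ∀ (i : Fin n) (j : Fin (σ.ar (f i))),
        PTeq (c i j) (c' (e i) (Fin.cast (by rw [hf i]) j))) :
      PTeq (.node n f c) (.node n' f' c')

/-- The binary parallel composition term. -/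
def par2 {σ : Sig} (par : σ.Symb) (h2 : σ.ar par = 2) (a b : Term σ Empty) :
    Term σ Empty :=
  .app par (fun i => if (i : ℕ) = 0 then a else b)

/-- Equality of ground terms modulo associativity and commutativity of `∥`. -/
inductive ACeq {σ : Sig} (par : σ.Symb) (h2 : σ.ar par = 2) :
    Term σ Empty → Term σ Empty → Prop
  | refl (t) : ACeq par h2 t t
  | symm {s t} : ACeq par h2 s t → ACeq par h2 t s
  | trans {s t u} : ACeq par h2 s t → ACeq par h2 t u → ACeq par h2 s u
  | congr (f : σ.Symb) (args args' : Fin (σ.ar f) → Term σ Empty) :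
      (∀ i, ACeq par h2 (args i) (args' i)) →
      ACeq par h2 (.app f args) (.app f args')
  | assoc (a b c) :
      ACeq par h2 (par2 par h2 (par2 par h2 a b) c) (par2 par h2 a (par2 par h2 b c))
  | comm (a b) : ACeq par h2 (par2 par h2 a b) (par2 par h2 b a)

/-!
Modulo associativity and commutativity, `par` makes ground terms a commutative semigroup, and
in it every term is the product of the subterms headed by its root edges, i.e. by the non-`par`
symbols below a maximal `par`-subterm. An equivalence of parse trees matches these root edges
bijectively, with equal labels and argument subterms whose parse trees are again equivalent.
By induction on the nesting of edges the matched factors are AC-equal, hence so are the products.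
-/

theorem List.prod_map_eq_prod_map_of_equiv {α β M : Type*} [CommMonoid M] {l₁ : List α}
    {l₂ : List β} (f : α → M) (g : β → M) (e : Fin l₁.length ≃ Fin l₂.length)
    (h : ∀ i, f l₁[i] = g l₂[e i]) : (l₁.map f).prod = (l₂.map g).prod := by
  rw [← Fin.prod_univ_fun_getElem, ← Fin.prod_univ_fun_getElem, ← e.prod_comp]
  exact Finset.prod_congr rfl fun i _ => h i

section

variable {σ : Sig}

def PTEdgeEq (a b : (f : σ.Symb) × (Fin (σ.ar f) → PT σ)) : Prop :=
  ∃ h : b.1 = a.1, ∀ j, PTeq (a.2 j) (b.2 (Fin.cast (congrArg σ.ar h.symm) j))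

theorem PTeq.exists_equiv_of_ofList {l₁ l₂ : List ((f : σ.Symb) × (Fin (σ.ar f) → PT σ))}
    (h : PTeq (ofList l₁) (ofList l₂)) :
    ∃ e : Fin l₁.length ≃ Fin l₂.length, ∀ i, PTEdgeEq l₁[i] l₂[e i] := by
  cases h with
  | mk _ _ _ _ _ _ e hf hc => exact ⟨e, fun i => ⟨hf i, hc i⟩⟩

variable (par : σ.Symb) (h2 : σ.ar par = 2)

theorem Term.app_par_eq_par2 (args : Fin (σ.ar par) → Term σ Empty) :
    Term.app par args = par2 par h2 (args ⟨0, by omega⟩) (args ⟨1, by omega⟩) := by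
  unfold par2
  congr 1
  funext ⟨i, hi⟩
  rw [h2] at hi
  interval_cases i <;> rfl

/-- The maximal non-`par` subterms reached from the root through `par` alone, as labelled edges
with their argument subterms. -/
noncomputable def Term.rootEdges :
    Term σ Empty → List ((f : σ.Symb) × (Fin (σ.ar f) → Term σ Empty))
  | .var x => x.elim
  | .app f args =>
    if h : f = par then
      have ha : σ.ar f = 2 := by rw [h, h2]
      rootEdges (args ⟨0, by omega⟩) ++ rootEdges (args ⟨1, by omega⟩)
    else
      [⟨f, args⟩]

noncomputable def collapseEdge (e : (f : σ.Symb) × (Fin (σ.ar f) → Term σ Empty)) :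
    (f : σ.Symb) × (Fin (σ.ar f) → PT σ) :=
  ⟨e.1, fun i => collapse par h2 (e.2 i)⟩

theorem collapseL_eq_map_rootEdges (t : Term σ Empty) :
    collapseL par h2 t = (t.rootEdges par h2).map (collapseEdge par h2) := by
  induction t with
  | var x => exact x.elim
  | app f args ih =>
    rw [collapseL, Term.rootEdges]
    split_ifs
    · simp only [ih, List.map_append]
    · rfl

theorem ACeq.par2_congr {a a' b b' : Term σ Empty} (ha : ACeq par h2 a a')
    (hb : ACeq par h2 b b') : ACeq par h2 (par2 par h2 a b) (par2 par h2 a' b') :=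
  ACeq.congr _ _ _ fun i => by by_cases hi : (i : ℕ) = 0 <;> simp [hi, ha, hb]

def ACeq.setoid : Setoid (Term σ Empty) :=
  ⟨ACeq par h2, ⟨ACeq.refl, ACeq.symm, ACeq.trans⟩⟩

def ACClass : Type :=
  Quotient (ACeq.setoid par h2)

namespace ACClass

variable {par h2}

def mk (t : Term σ Empty) : ACClass par h2 :=
  Quotient.mk _ t

theorem mk_eq_mk {s t : Term σ Empty} : mk s = (mk t : ACClass par h2) ↔ ACeq par h2 s t :=
  Quotient.eq

instance : Mul (ACClass par h2) :=
  ⟨Quotient.map₂ (par2 par h2) fun _ _ ha _ _ hb => ACeq.par2_congr par h2 ha hb⟩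

theorem mk_mul_mk (s t : Term σ Empty) :
    mk s * mk t = (mk (par2 par h2 s t) : ACClass par h2) :=
  rfl

instance : CommSemigroup (ACClass par h2) where
  mul_assoc := by
    rintro ⟨a⟩ ⟨b⟩ ⟨c⟩
    exact Quotient.sound (ACeq.assoc a b c)
  mul_comm := by
    rintro ⟨a⟩ ⟨b⟩
    exact Quotient.sound (ACeq.comm a b)

theorem coe_mk_eq_prod_rootEdges (t : Term σ Empty) :
    ((mk t : ACClass par h2) : WithOne (ACClass par h2)) =
      ((t.rootEdges par h2).map fun e =>
        ((mk (.app e.1 e.2) : ACClass par h2) : WithOne (ACClass par h2))).prod := by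
  induction t with
  | var x => exact x.elim
  | app f args ih =>
    rw [Term.rootEdges]
    split_ifs with h
    · subst h
      rw [Term.app_par_eq_par2 f h2, ← mk_mul_mk, WithOne.coe_mul, ih, ih, List.map_append,
        List.prod_append]
    · simp

end ACClass

theorem exists_equiv_rootEdges_of_ptEq {t t' : Term σ Empty}
    (h : PTeq (collapse par h2 t) (collapse par h2 t')) :
    ∃ e : Fin (t.rootEdges par h2).length ≃ Fin (t'.rootEdges par h2).length,
      ∀ i, PTEdgeEq (collapseEdge par h2 (t.rootEdges par h2)[i])
        (collapseEdge par h2 (t'.rootEdges par h2)[e i]) := by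
  rw [collapse, collapse, collapseL_eq_map_rootEdges, collapseL_eq_map_rootEdges] at h
  obtain ⟨e, he⟩ := PTeq.exists_equiv_of_ofList h
  refine ⟨(finCongr (List.length_map _).symm).trans (e.trans (finCongr (List.length_map _))),
    fun i => ?_⟩
  simpa using he (finCongr (List.length_map _).symm i)

def DeterminedByParseTree (t : Term σ Empty) : Prop :=
  ∀ t', PTeq (collapse par h2 t) (collapse par h2 t') → ACeq par h2 t t'

theorem ACeq.app_of_ptEdgeEq {f : σ.Symb} {args : Fin (σ.ar f) → Term σ Empty}
    {b : (f : σ.Symb) × (Fin (σ.ar f) → Term σ Empty)}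
    (h : PTEdgeEq (collapseEdge par h2 ⟨f, args⟩) (collapseEdge par h2 b))
    (hargs : ∀ i, DeterminedByParseTree par h2 (args i)) :
    ACeq par h2 (.app f args) (.app b.1 b.2) := by
  obtain ⟨g, args'⟩ := b
  obtain ⟨hg, hc⟩ := h
  dsimp only [collapseEdge] at hg hc
  subst hg
  exact ACeq.congr _ _ _ fun i => hargs i _ (hc i)

theorem determinedByParseTree_of_rootEdges {t : Term σ Empty}
    (h : ∀ e ∈ t.rootEdges par h2, ∀ i, DeterminedByParseTree par h2 (e.2 i)) :
    DeterminedByParseTree par h2 t := by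
  intro t' ht
  obtain ⟨e, he⟩ := exists_equiv_rootEdges_of_ptEq par h2 ht
  rw [← ACClass.mk_eq_mk, ← WithOne.coe_inj, ACClass.coe_mk_eq_prod_rootEdges,
    ACClass.coe_mk_eq_prod_rootEdges]
  refine List.prod_map_eq_prod_map_of_equiv _ _ e fun i => ?_
  rw [WithOne.coe_inj, ACClass.mk_eq_mk]
  exact ACeq.app_of_ptEdgeEq par h2 (he i) (h _ (List.getElem_mem _))

/-- Stated for the arguments of root edges, which are not immediate subterms, so that structural
induction reaches them. -/
theorem determinedByParseTree_rootEdges (t : Term σ Empty) :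
    ∀ e ∈ t.rootEdges par h2, ∀ i, DeterminedByParseTree par h2 (e.2 i) := by
  induction t with
  | var x => exact x.elim
  | app f args ih =>
    rw [Term.rootEdges]
    split_ifs
    · simpa only [List.mem_append, or_imp, forall_and] using ⟨ih _, ih _⟩
    · simpa using fun i => determinedByParseTree_of_rootEdges par h2 (ih i)

end

/-- two ground terms with the same parse tree (up to permutation
of edges at each node) are equal modulo associativity and commutativity of the
parallel composition. -/
theorem parse_tree_unique_up_to_AC {σ : Sig} (par : σ.Symb) (h2 : σ.ar par = 2)
    (t₁ t₂ : Term σ Empty)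
    (h : PTeq (collapse par h2 t₁) (collapse par h2 t₂)) :
    ACeq par h2 t₁ t₂ :=
  determinedByParseTree_of_rootEdges par h2 (determinedByParseTree_rootEdges par h2 t₁) t₂ h
end
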